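/- arXiv:2204.05301 — 4 statements merged into one kernel-verified Lean document; each statement's English description precedes it below -/
import Mathlib

section
/- Let g be a finite-dimensional Lie algebra over a field k of characteristic zero whose Killing form is nondegenerate, and for a,b,c,d ∈ g set T(a,b,c,d) = Tr(ad a ∘ ad b ∘ ad c ∘ ad d). Then the expression S(a,b,c,d) = T(a,b,c,d) + T(a,c,d,b) + T(a,d,b,c) is symmetric under every permutation of the four arguments a, b, c, d. -/
open LieAlgebra in
/-- The quartic adjoint trace `T(a,b,c,d) = Tr(ad a ∘ ad b ∘ ad c ∘ ad d)`. -/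
noncomputable def adTrace4 (k : Type*) {L : Type*} [Field k]
    [LieRing L] [LieAlgebra k L] (a b c d : L) : k :=
  LinearMap.trace k L (ad k L a ∘ₗ ad k L b ∘ₗ ad k L c ∘ₗ ad k L d)

/-- The cyclic sum `S(a,b,c,d) = T(a,b,c,d) + T(a,c,d,b) + T(a,d,b,c)`. -/
noncomputable def adTraceS (k : Type*) {L : Type*} [Field k]
    [LieRing L] [LieAlgebra k L] (a b c d : L) : k :=
  adTrace4 k a b c d + adTrace4 k a c d b + adTrace4 k a d b c

section aux

open LieAlgebra LinearMap

variable {k L : Type*} [Field k] [LieRing L] [LieAlgebra k L]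

lemma adTrace4_cyc (a b c d : L) : adTrace4 k a b c d = adTrace4 k b c d a := by
  simp only [adTrace4, ← Module.End.mul_eq_comp]
  rw [LinearMap.trace_mul_comm, mul_assoc, mul_assoc]

variable [Module.Finite k L]

lemma adTrace4_rev (hκ : (killingForm k L).Nondegenerate) (a b c d : L) :
    adTrace4 k a b c d = adTrace4 k d c b a := by
  set e := (killingForm k L).toDual hκ with he
  set Φ : Module.End k L → Module.End k L := fun f => e.symm.conj f.dualMap with hΦ
  have htr : ∀ f : Module.End k L, trace k L (Φ f) = trace k L f := by
    intro f
    rw [hΦ, LinearMap.trace_conj']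
    exact LinearMap.trace_transpose' f
  have hcomp : ∀ f g : Module.End k L, Φ (f ∘ₗ g) = Φ g ∘ₗ Φ f := by
    intro f g
    simp only [hΦ, ← LinearMap.dualMap_comp_dualMap, LinearEquiv.conj_comp]
  have had : ∀ x : L, Φ (ad k L x) = - ad k L x := by
    intro x
    ext y
    apply e.injective
    ext z
    simp only [hΦ, LinearEquiv.conj_apply_apply, LinearEquiv.apply_symm_apply,
      LinearMap.dualMap_apply', LinearMap.neg_apply, map_neg, LinearMap.coe_comp,
      Function.comp_apply, LinearEquiv.symm_symm, LieAlgebra.ad_apply]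
    have h1 : e y ⁅x, z⁆ = killingForm k L y ⁅x, z⁆ :=
      LinearMap.BilinForm.toDual_def hκ
    have h2 : e ⁅x, y⁆ z = killingForm k L ⁅x, y⁆ z :=
      LinearMap.BilinForm.toDual_def hκ
    rw [h1, h2, LieModule.traceForm_apply_lie_apply' k L L x y z, neg_neg]
  calc adTrace4 k a b c d
      = trace k L (Φ (ad k L a ∘ₗ ad k L b ∘ₗ ad k L c ∘ₗ ad k L d)) := (htr _).symm
    _ = adTrace4 k d c b a := by
        rw [hcomp, hcomp, hcomp, had a, had b, had c, had d]
        simp [adTrace4, LinearMap.neg_comp, LinearMap.comp_neg, LinearMap.comp_assoc]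

variable (hκ : (killingForm k L).Nondegenerate)
include hκ

lemma adTraceS_01 (a b c d : L) : adTraceS k b a c d = adTraceS k a b c d := by
  unfold adTraceS
  rw [adTrace4_cyc b a c d, ← adTrace4_cyc a b c d, adTrace4_rev hκ b d a c,
    adTrace4_cyc c a d b]
  ring

lemma adTraceS_12 (a b c d : L) : adTraceS k a c b d = adTraceS k a b c d := by
  unfold adTraceS
  rw [adTrace4_rev hκ a c b d, ← adTrace4_cyc a d b c,
    adTrace4_rev hκ a b d c, ← adTrace4_cyc a c d b,
    adTrace4_rev hκ a d c b, ← adTrace4_cyc a b c d]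
  ring

lemma adTraceS_23 (a b c d : L) : adTraceS k a b d c = adTraceS k a b c d := by
  calc adTraceS k a b d c = adTraceS k a c b d := by unfold adTraceS; ring
    _ = adTraceS k a b c d := adTraceS_12 hκ a b c d

lemma adTraceS_02 (a b c d : L) : adTraceS k c b a d = adTraceS k a b c d := by
  calc adTraceS k c b a d = adTraceS k c a b d := adTraceS_12 hκ c a b d
    _ = adTraceS k a c b d := adTraceS_01 hκ a c b d
    _ = adTraceS k a b c d := adTraceS_12 hκ a b c d

lemma adTraceS_03 (a b c d : L) : adTraceS k d b c a = adTraceS k a b c d := by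
  calc adTraceS k d b c a = adTraceS k d b a c := adTraceS_23 hκ d b a c
    _ = adTraceS k a b d c := adTraceS_02 hκ a b d c
    _ = adTraceS k a b c d := adTraceS_23 hκ a b c d

lemma adTraceS_13 (a b c d : L) : adTraceS k a d c b = adTraceS k a b c d := by
  calc adTraceS k a d c b = adTraceS k a d b c := adTraceS_23 hκ a d b c
    _ = adTraceS k a b d c := adTraceS_12 hκ a b d c
    _ = adTraceS k a b c d := adTraceS_23 hκ a b c d

lemma adTraceS_swap (w : Fin 4 → L) (x y : Fin 4) :
    adTraceS k (w (Equiv.swap x y 0)) (w (Equiv.swap x y 1))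
      (w (Equiv.swap x y 2)) (w (Equiv.swap x y 3)) =
    adTraceS k (w 0) (w 1) (w 2) (w 3) := by
  fin_cases x <;> fin_cases y <;>
    simp only [Equiv.swap_apply_def] <;>
    norm_num <;>
    first
      | rfl
      | exact adTraceS_01 hκ _ _ _ _
      | exact adTraceS_12 hκ _ _ _ _
      | exact adTraceS_23 hκ _ _ _ _
      | exact adTraceS_02 hκ _ _ _ _
      | exact adTraceS_03 hκ _ _ _ _
      | exact adTraceS_13 hκ _ _ _ _

end aux

/-- For a finite-dimensional Lie algebra over a field of characteristic zero with
nondegenerate Killing form, the expression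
`S(a,b,c,d) = T(a,b,c,d) + T(a,c,d,b) + T(a,d,b,c)` is symmetric under every
permutation of its four arguments. -/
theorem adTraceS_symmetric {k L : Type*} [Field k] [CharZero k]
    [LieRing L] [LieAlgebra k L] [Module.Finite k L]
    (hκ : (killingForm k L).Nondegenerate)
    (v : Fin 4 → L) (σ : Equiv.Perm (Fin 4)) :
    adTraceS k (v (σ 0)) (v (σ 1)) (v (σ 2)) (v (σ 3)) =
      adTraceS k (v 0) (v 1) (v 2) (v 3) := by
  have key : ∀ σ : Equiv.Perm (Fin 4), ∀ v : Fin 4 → L,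
      adTraceS k (v (σ 0)) (v (σ 1)) (v (σ 2)) (v (σ 3)) =
        adTraceS k (v 0) (v 1) (v 2) (v 3) := by
    intro σ
    refine Equiv.Perm.swap_induction_on σ (fun v => rfl) ?_
    intro f x y hxy IH v
    calc adTraceS k (v ((Equiv.swap x y * f) 0)) (v ((Equiv.swap x y * f) 1))
          (v ((Equiv.swap x y * f) 2)) (v ((Equiv.swap x y * f) 3))
        = adTraceS k ((v ∘ Equiv.swap x y) (f 0)) ((v ∘ Equiv.swap x y) (f 1))
            ((v ∘ Equiv.swap x y) (f 2)) ((v ∘ Equiv.swap x y) (f 3)) := rfl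
      _ = adTraceS k ((v ∘ Equiv.swap x y) 0) ((v ∘ Equiv.swap x y) 1)
            ((v ∘ Equiv.swap x y) 2) ((v ∘ Equiv.swap x y) 3) := IH _
      _ = adTraceS k (v 0) (v 1) (v 2) (v 3) := adTraceS_swap hκ v x y
  exact key σ v
end

section
/- Let n ≥ 2 and let X be a trace-zero n×n complex matrix. Viewing ad X as the linear endomorphism Y ↦ XY − YX of the space sl(n,ℂ) of trace-zero n×n complex matrices, the trace of (ad X)⁴ as an endomorphism of sl(n,ℂ) equals 2n·tr(X⁴) + 6·(tr(X²))². -/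
/-!
Commutators are traceless, so for `k ≥ 1` the map `(ad X)^k` sends all of `gl(n)` into `sl(n)`,
and its trace on `sl(n)` equals its trace on `gl(n)`. On `gl(n)`, `ad X = L_X - R_X` is a
difference of commuting left and right multiplications, and `tr (L_A R_B) = tr A · tr B`.
Expanding `(L_X - R_X)^4` binomially and using `tr X = 0`, `tr 1 = n` leaves
`2n·tr(X⁴) + 6·(tr X²)²`.
-/

open LieAlgebra LinearMap

attribute [local instance 100] LieRing.ofAssociativeRing

theorem LieSubalgebra.trace_ad_pow_eq_of_lie_mem {K L : Type*} [CommRing K] [IsDomain K]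
    [IsPrincipalIdealRing K] [LieRing L] [LieAlgebra K L] [Module.Free K L] [Module.Finite K L]
    (H : LieSubalgebra K L) (hH : ∀ x y : L, ⁅x, y⁆ ∈ H) (x : H) {k : ℕ} (hk : k ≠ 0) :
    trace K H (ad K H x ^ k) = trace K L (ad K L x ^ k) := by
  have hmaps : ∀ y ∈ H.toSubmodule, ad K L x y ∈ H.toSubmodule := fun y _ ↦ hH x y
  have hrange : ∀ y, (ad K L x ^ k) y ∈ H.toSubmodule := by
    intro y
    obtain ⟨j, rfl⟩ := Nat.exists_eq_succ_of_ne_zero hk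
    rw [pow_succ', Module.End.mul_apply]
    exact hH x _
  have hres : ad K H x = (ad K L x).restrict hmaps := by
    ext y; rfl
  rw [hres, Module.End.pow_restrict]
  exact trace_restrict_eq_of_forall_mem _ _ hrange

namespace Matrix

theorem stdBasis_repr_apply {m n : Type*} [Fintype m] [Finite n] {R : Type*} [Semiring R]
    (M : Matrix m n R) (p : m × n) : (stdBasis R m n).repr M p = M p.1 p.2 := by
  simp [stdBasis, Module.Basis.map_repr, Module.Basis.repr_reindex]

variable {ι R : Type*} [Fintype ι] [DecidableEq ι] [CommRing R]

theorem trace_mulLeft_mul_mulRight (A B : Matrix ι ι R) :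
    LinearMap.trace R (Matrix ι ι R) (mulLeft R A * mulRight R B) = A.trace * B.trace := by
  have hdiag : ∀ i j, (A * single i j (1 : R) * B) i j = A i i * B j j := fun i j ↦ by
    simp [mul_apply, single, ite_and]
  rw [trace_eq_matrix_trace R (stdBasis R ι ι), Matrix.trace, Matrix.trace, Matrix.trace,
    Finset.sum_mul_sum, ← Finset.univ_product_univ, Finset.sum_product]
  simp only [diag_apply, toMatrix_apply, stdBasis_repr_apply, stdBasis_eq_single,
    Module.End.mul_apply, mulLeft_apply, mulRight_apply, ← Matrix.mul_assoc, hdiag]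

theorem trace_mulLeft_add_mulRight_pow (A B : Matrix ι ι R) (k : ℕ) :
    LinearMap.trace R (Matrix ι ι R) ((mulLeft R A + mulRight R B) ^ k) =
      ∑ m ∈ Finset.range (k + 1), k.choose m * ((A ^ m).trace * (B ^ (k - m)).trace) := by
  rw [(commute_mulLeft_right A B).add_pow, map_sum]
  refine Finset.sum_congr rfl fun m _ ↦ ?_
  rw [pow_mulLeft, pow_mulRight, ← Nat.cast_comm, ← nsmul_eq_mul, map_nsmul,
    trace_mulLeft_mul_mulRight, nsmul_eq_mul]

theorem trace_neg_pow (A : Matrix ι ι R) (k : ℕ) :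
    ((-A) ^ k).trace = (-1) ^ k * (A ^ k).trace := by
  rcases k.even_or_odd with hk | hk <;> simp [hk.neg_pow]

theorem trace_ad_pow (X : Matrix ι ι R) (k : ℕ) :
    LinearMap.trace R (Matrix ι ι R) (ad R (Matrix ι ι R) X ^ k) =
      ∑ m ∈ Finset.range (k + 1),
        (-1) ^ (k - m) * k.choose m * ((X ^ m).trace * (X ^ (k - m)).trace) := by
  have hneg : -mulRight R X = mulRight R (-X) := by ext; simp
  rw [ad_eq_lmul_left_sub_lmul_right, Pi.sub_apply, sub_eq_add_neg, hneg,
    trace_mulLeft_add_mulRight_pow]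
  refine Finset.sum_congr rfl fun m _ ↦ ?_
  rw [trace_neg_pow]
  ring

end Matrix

open LieAlgebra LieAlgebra.SpecialLinear in
theorem sl_adjoint_quartic_trace_general (n : ℕ)
    (X : Matrix (Fin n) (Fin n) ℂ) (hX : X.trace = 0) :
    LinearMap.trace ℂ (sl (Fin n) ℂ)
        ((ad ℂ (sl (Fin n) ℂ) ⟨X, hX⟩) ^ 4) =
      2 * n * (X ^ 4).trace + 6 * (X ^ 2).trace ^ 2 := by
  have hsl (A B : Matrix (Fin n) (Fin n) ℂ) : ⁅A, B⁆ ∈ sl (Fin n) ℂ :=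
    LinearMap.mem_ker.2 (matrix_trace_commutator_zero _ _ A B)
  rw [(sl (Fin n) ℂ).trace_ad_pow_eq_of_lie_mem hsl _ four_ne_zero, Matrix.trace_ad_pow]
  simp [Finset.sum_range_succ, hX, Nat.choose]
  ring

open LieAlgebra LieAlgebra.SpecialLinear in
/-- For `n ≥ 2` and a trace-zero `n×n` complex matrix `X`, the trace of `(ad X)⁴` as an
endomorphism of `sl(n,ℂ)` equals `2n·tr(X⁴) + 6·(tr(X²))²`. -/
theorem sl_adjoint_quartic_trace (n : ℕ) (hn : 2 ≤ n)
    (X : Matrix (Fin n) (Fin n) ℂ) (hX : X.trace = 0) :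
    LinearMap.trace ℂ (sl (Fin n) ℂ)
        ((ad ℂ (sl (Fin n) ℂ) ⟨X, hX⟩) ^ 4) =
      2 * n * (X ^ 4).trace + 6 * (X ^ 2).trace ^ 2 :=
  sl_adjoint_quartic_trace_general n X hX
end

section
/- For every trace-zero 2×2 complex matrix X, the trace of (ad X)⁴, where ad X is the endomorphism Y ↦ XY − YX of the space of trace-zero 2×2 complex matrices, equals 8·(tr(X²))². -/
/-!
A trace-zero `2 × 2` matrix satisfies `X² = c • 1` with `c = -det X`, so `tr (X²) = 2c`.
Expanding `(ad X)³ Y = X³Y - 3X²YX + 3XYX² - YX³` then gives `(ad X)³ = 4c • ad X`,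
hence `(ad X)⁴ = 4c • (ad X)²`. The trace of `(ad X)²` is the Killing form `κ(X, X)`,
which on `sl(2)` equals `4 tr (X²) = 8c`, so `tr (ad X)⁴ = 32c² = 8 tr (X²)²`.
-/

open LieAlgebra LieAlgebra.SpecialLinear Matrix

theorem Matrix.mul_self_eq_neg_det_smul_one_of_trace_eq_zero {R : Type*} [CommRing R]
    {A : Matrix (Fin 2) (Fin 2) R} (hA : A.trace = 0) : A * A = (-A.det) • 1 := by
  have h11 : A 1 1 = -A 0 0 := eq_neg_of_add_eq_zero_right (by rwa [trace_fin_two] at hA)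
  ext i j
  fin_cases i <;> fin_cases j <;>
    simp only [Fin.zero_eta, Fin.mk_one, Fin.isValue, mul_apply, Fin.sum_univ_two, det_fin_two, h11,
      smul_apply, one_apply_eq, one_apply_ne, ne_eq, zero_ne_one, one_ne_zero, not_false_eq_true,
      smul_eq_mul] <;> ring

section OfAssociative

attribute [local instance] LieRing.ofAssociativeRing

theorem LieSubalgebra.ad_pow_three_of_mul_self_eq_algebraMap {R A : Type*} [CommRing R] [Ring A]
    [Algebra R A] {L : LieSubalgebra R A} {x : L} {c : R} (hx : (x : A) * x = algebraMap R A c) :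
    ad R L x ^ 3 = (4 * c) • ad R L x := by
  ext y
  have hl : ∀ z : A, x * x * z = c • z := fun z => by
    rw [hx, Algebra.smul_def]
  have hr : ∀ z : A, z * x * x = c • z := fun z => by
    rw [mul_assoc, hx, Algebra.smul_def, Algebra.commutes]
  simp only [pow_succ, pow_zero, one_mul, Module.End.mul_apply, LinearMap.smul_apply, ad_apply,
    LieSubalgebra.coe_bracket, SetLike.val_smul, Ring.lie_def, mul_sub, sub_mul, ← mul_assoc, hl, hr,
    smul_mul_assoc, mul_smul_comm]
  module

end OfAssociative

namespace LieAlgebra.SpecialLinear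

variable {R : Type*} [CommRing R]

theorem sl_two_val_one_one (A : sl (Fin 2) R) : A.val 1 1 = -A.val 0 0 := by
  have hA : A.val.trace = 0 := A.property
  rw [trace_fin_two] at hA
  exact eq_neg_of_add_eq_zero_right hA

def slTwoEquivFun : sl (Fin 2) R ≃ₗ[R] (Fin 3 → R) where
  toFun A := ![A.val 0 0, A.val 0 1, A.val 1 0]
  map_add' A B := by funext i; fin_cases i <;> rfl
  map_smul' c A := by funext i; fin_cases i <;> rfl
  invFun v := ⟨!![v 0, v 1; v 2, -v 0], by simp [sl, trace_fin_two]⟩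
  left_inv A := by
    ext i j
    fin_cases i <;> fin_cases j <;> simp [sl_two_val_one_one]
  right_inv v := by funext i; fin_cases i <;> rfl

noncomputable def slTwoBasis : Module.Basis (Fin 3) R (sl (Fin 2) R) :=
  .ofEquivFun slTwoEquivFun

theorem slTwoBasis_zero_val : (slTwoBasis 0 : sl (Fin 2) R).val = !![1, 0; 0, -1] := by
  rw [slTwoBasis, Module.Basis.coe_ofEquivFun]
  ext i j; fin_cases i <;> fin_cases j <;> simp [slTwoEquivFun]

theorem slTwoBasis_one_val : (slTwoBasis 1 : sl (Fin 2) R).val = !![0, 1; 0, 0] := by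
  rw [slTwoBasis, Module.Basis.coe_ofEquivFun]
  ext i j; fin_cases i <;> fin_cases j <;> simp [slTwoEquivFun]

theorem slTwoBasis_two_val : (slTwoBasis 2 : sl (Fin 2) R).val = !![0, 0; 1, 0] := by
  rw [slTwoBasis, Module.Basis.coe_ofEquivFun]
  ext i j; fin_cases i <;> fin_cases j <;> simp [slTwoEquivFun]

theorem trace_sl_two (f : Module.End R (sl (Fin 2) R)) :
    LinearMap.trace R _ f =
      (f (slTwoBasis 0)).val 0 0 + (f (slTwoBasis 1)).val 0 1 + (f (slTwoBasis 2)).val 1 0 := by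
  rw [LinearMap.trace_eq_matrix_trace R slTwoBasis, trace_fin_three]
  simp only [LinearMap.toMatrix_apply]
  rfl

theorem killingForm_sl_two (X Y : sl (Fin 2) R) :
    killingForm R (sl (Fin 2) R) X Y = 4 * (X.val * Y.val).trace := by
  rw [killingForm_apply_apply, trace_sl_two]
  simp only [LinearMap.comp_apply, ad_apply, LieSubalgebra.coe_bracket, Ring.lie_def,
    Matrix.sub_apply, mul_apply, Fin.sum_univ_two, slTwoBasis_zero_val, slTwoBasis_one_val,
    slTwoBasis_two_val, of_apply, cons_val', cons_val_zero, cons_val_one, cons_val_fin_one,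
    trace_fin_two, sl_two_val_one_one]
  ring

end LieAlgebra.SpecialLinear

open LieAlgebra LieAlgebra.SpecialLinear in
/-- For every trace-zero 2×2 complex matrix `X`, the trace of `(ad X)⁴` as an
endomorphism of `sl(2,ℂ)` equals `8·(tr(X²))²`. -/
theorem sl2_adjoint_quartic_trace
    (X : Matrix (Fin 2) (Fin 2) ℂ) (hX : X.trace = 0) :
    LinearMap.trace ℂ (sl (Fin 2) ℂ)
        ((ad ℂ (sl (Fin 2) ℂ) ⟨X, hX⟩) ^ 4) =
      8 * (X ^ 2).trace ^ 2 := by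
  set x : sl (Fin 2) ℂ := ⟨X, hX⟩
  set c := -X.det
  have hsq : X * X = c • 1 := mul_self_eq_neg_det_smul_one_of_trace_eq_zero hX
  have had3 : ad ℂ _ x ^ 3 = (4 * c) • ad ℂ _ x :=
    LieSubalgebra.ad_pow_three_of_mul_self_eq_algebraMap <| by
      rw [Algebra.algebraMap_eq_smul_one]; exact hsq
  have htr : (X ^ 2).trace = 2 * c := by
    rw [sq, hsq, trace_smul, trace_one, Fintype.card_fin, smul_eq_mul]; ring
  calc LinearMap.trace ℂ _ (ad ℂ _ x ^ 4)
      = 4 * c * killingForm ℂ _ x x := by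
        rw [pow_succ, had3, smul_mul_assoc, map_smul, killingForm_apply_apply, smul_eq_mul,
          Module.End.mul_eq_comp]
    _ = 4 * c * (4 * (2 * c)) := by rw [killingForm_sl_two, ← sq, htr]
    _ = 8 * (X ^ 2).trace ^ 2 := by rw [htr]; ring
end

section
/- For every trace-zero 3×3 complex matrix X, the trace of (ad X)⁴, where ad X is the endomorphism Y ↦ XY − YX of the space of trace-zero 3×3 complex matrices, equals 9·(tr(X²))². -/
/-!
On all of `gl(n)`, `ad X` is the difference of the commuting operators `Y ↦ XY` and `Y ↦ YX`,
and `Y ↦ AYB` has trace `tr A · tr B`, so the binomial theorem gives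
`Tr((ad X)^k) = ∑ (k choose m) (-1)^(k-m) tr(X^m) tr(X^(k-m))`. For `k ≥ 1` the operator
`(ad X)^k` takes values in `sl(n)`, so its trace on `sl(n)` is the same. For `n = 3` and
`tr X = 0` this is `6 tr(X⁴) + 6 tr(X²)²`, and Cayley–Hamilton gives `2 tr(X⁴) = tr(X²)²`.
-/

open LieAlgebra LieAlgebra.SpecialLinear

namespace Matrix

section CommRing

variable {n R : Type*} [Fintype n] [DecidableEq n] [CommRing R]

theorem trace_mulLeft_mul_mulRight_s13 (A B : Matrix n n R) :
    LinearMap.trace R (Matrix n n R) (LinearMap.mulLeft R A * LinearMap.mulRight R B) =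
      trace A * trace B := by
  have hrepr (M : Matrix n n R) (i j : n) : (stdBasis R n n).repr M (i, j) = M i j := by
    simp [stdBasis]
  rw [LinearMap.trace_eq_matrix_trace R (stdBasis R n n), trace, trace, trace,
    Finset.sum_mul_sum, Fintype.sum_prod_type]
  simp [LinearMap.toMatrix_apply, stdBasis_eq_single, hrepr, mul_apply, single_apply, ite_and]

theorem trace_mulLeft_sub_mulRight_pow (X : Matrix n n R) (k : ℕ) :
    LinearMap.trace R (Matrix n n R) ((LinearMap.mulLeft R X - LinearMap.mulRight R X) ^ k) =
      ∑ m ∈ Finset.range (k + 1),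
        k.choose m * (-1) ^ (k - m) * trace (X ^ m) * trace (X ^ (k - m)) := by
  have hneg : -LinearMap.mulRight R X = LinearMap.mulRight R (-X) := by ext; simp
  rw [sub_eq_add_neg, hneg, (LinearMap.commute_mulLeft_right X (-X)).add_pow, map_sum]
  refine Finset.sum_congr rfl fun m _ => ?_
  rw [← nsmul_eq_mul', map_nsmul, LinearMap.pow_mulLeft, LinearMap.pow_mulRight,
    trace_mulLeft_mul_mulRight_s13, ← neg_one_smul R X, smul_pow, trace_smul, nsmul_eq_mul,
    smul_eq_mul]
  ring

theorem two_mul_trace_pow_four_of_trace_eq_zero (X : Matrix (Fin 3) (Fin 3) R)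
    (hX : trace X = 0) : 2 * trace (X ^ 4) = trace (X ^ 2) ^ 2 := by
  rw [trace_fin_three] at hX
  have h22 : X 2 2 = -(X 0 0 + X 1 1) := by linear_combination hX
  simp only [trace_fin_three, pow_succ, pow_zero, one_mul, mul_apply, Fin.sum_univ_three, h22]
  ring

end CommRing

section Field

variable {n K : Type*} [Fintype n] [DecidableEq n] [Field K]

attribute [local instance] LieRing.ofAssociativeRing

theorem trace_ad_sl_pow (X : sl n K) {k : ℕ} (hk : k ≠ 0) :
    LinearMap.trace K (sl n K) (ad K (sl n K) X ^ k) =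
      LinearMap.trace K (Matrix n n K)
        ((LinearMap.mulLeft K X.1 - LinearMap.mulRight K X.1) ^ k) := by
  set f := LinearMap.mulLeft K X.1 - LinearMap.mulRight K X.1
  have hmem (Y : Matrix n n K) : f Y ∈ (sl n K).toSubmodule := by
    show trace (X.1 * Y - Y * X.1) = 0
    rw [trace_sub, trace_mul_comm, sub_self]
  have hpow_mem (Y : Matrix n n K) : (f ^ k) Y ∈ (sl n K).toSubmodule := by
    obtain ⟨j, rfl⟩ := Nat.exists_eq_succ_of_ne_zero hk
    rw [pow_succ', Module.End.mul_apply]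
    exact hmem _
  have had : ad K (sl n K) X = f.restrict fun Y _ => hmem Y := rfl
  rw [had, Module.End.pow_restrict, ← LinearMap.trace_restrict_eq_of_forall_mem _ _ hpow_mem]
  rfl

end Field

end Matrix

open LieAlgebra LieAlgebra.SpecialLinear in
/-- For every trace-zero 3×3 complex matrix `X`, the trace of `(ad X)⁴` as an
endomorphism of `sl(3,ℂ)` equals `9·(tr(X²))²`. -/
theorem sl3_adjoint_quartic_trace
    (X : Matrix (Fin 3) (Fin 3) ℂ) (hX : X.trace = 0) :
    LinearMap.trace ℂ (sl (Fin 3) ℂ)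
        ((ad ℂ (sl (Fin 3) ℂ) ⟨X, hX⟩) ^ 4) =
      9 * (X ^ 2).trace ^ 2 := by
  rw [Matrix.trace_ad_sl_pow _ four_ne_zero, Matrix.trace_mulLeft_sub_mulRight_pow]
  simp only [Finset.sum_range_succ, Finset.sum_range_zero, Nat.choose, Nat.reduceSub, pow_zero,
    pow_one, Matrix.trace_one, Fintype.card_fin, hX]
  linear_combination 3 * Matrix.two_mul_trace_pow_four_of_trace_eq_zero X hX
end
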